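/- The entries of the inverse frame matrix satisfy the RTT-relations of SO_q(3): in any algebra B as in the context, if E is the two-sided inverse of the frame matrix M, then Σ_{k,l} R̂^{ij}_{kl} E^k_a E^l_b = Σ_{c,d} E^i_c E^j_d R̂^{cd}_{ab} for all i, j, a, b ∈ {1, 2, 3}. -/

import Mathlib

noncomputable section

/-- The FRT R-matrix of `SO_q(3)`: `Rfrt q i j k l = R^{ij}_{kl}`, with indices
`0, 1, 2` corresponding to `(−, 0, +)` (i.e. to `1, 2, 3`). -/
def Rfrt (q : ℝ) (i j k l : Fin 3) : ℂ :=
  let Q : ℂ := (q : ℂ)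
  let s : ℂ := (Real.sqrt q : ℂ)
  match i.1, j.1, k.1, l.1 with
  | 0,0,0,0 => Q                        -- R^{11}_{11} = q
  | 2,2,2,2 => Q                        -- R^{33}_{33} = q
  | 1,1,1,1 => 1                        -- R^{22}_{22} = 1
  | 0,1,0,1 => 1                        -- R^{12}_{12} = 1
  | 1,0,1,0 => 1                        -- R^{21}_{21} = 1
  | 1,2,1,2 => 1                        -- R^{23}_{23} = 1
  | 2,1,2,1 => 1                        -- R^{32}_{32} = 1
  | 0,2,0,2 => Q⁻¹                      -- R^{13}_{13} = q⁻¹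
  | 2,0,2,0 => Q⁻¹                      -- R^{31}_{31} = q⁻¹
  | 1,0,0,1 => Q - Q⁻¹                  -- R^{21}_{12} = q − q⁻¹
  | 2,1,1,2 => Q - Q⁻¹                  -- R^{32}_{23} = q − q⁻¹
  | 2,0,0,2 => (Q - Q⁻¹) * (1 - Q⁻¹)    -- R^{31}_{13} = (q − q⁻¹)(1 − q⁻¹)
  | 1,1,0,2 => -(Q - Q⁻¹) * s⁻¹         -- R^{22}_{13} = −(q − q⁻¹) q^{-1/2}
  | 2,0,1,1 => -(Q - Q⁻¹) * s⁻¹         -- R^{31}_{22} = −(q − q⁻¹) q^{-1/2}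
  | _,_,_,_ => 0

/-- The braid matrix `R̂` of `SO_q(3)`, as a linear endomorphism (matrix) of `ℂ³ ⊗ ℂ³`:
`R̂^{ij}_{kl} = R^{ji}_{kl}`, with row index the pair `(i,j)` and column index `(k,l)`. -/
def Rhat (q : ℝ) : Matrix (Fin 3 × Fin 3) (Fin 3 × Fin 3) ℂ :=
  fun p r => Rfrt q p.2 p.1 r.1 r.2

/-- Data of an extended quantum Euclidean space inside a unital associative `ℂ`-algebra
`B`: coordinates `x^i`, differentials `ξ^i`, the dilatation `Λ` with inverse `Λi`, the
inverse `u` of `x²`, and the radius `ρ` with inverse `ρi`, subject to the defining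
relations (indices `0, 1, 2` correspond to `1, 2, 3`, i.e. to `(−, 0, +)`). -/
structure QSpace (q : ℝ) (B : Type*) [Ring B] [Algebra ℂ B] where
  x : Fin 3 → B
  ξ : Fin 3 → B
  Λ : B
  Λi : B
  u : B
  ρ : B
  ρi : B
  rel_x12 : x 0 * x 1 = (q : ℂ) • (x 1 * x 0)
  rel_x32 : x 2 * x 1 = ((q : ℂ))⁻¹ • (x 1 * x 2)
  rel_x31 : x 2 * x 0 - x 0 * x 2 = ((Real.sqrt q - (Real.sqrt q)⁻¹ : ℝ) : ℂ) • (x 1 * x 1)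
  rel_xξ : ∀ i j : Fin 3,
    x i * ξ j = (q : ℂ) • ∑ k : Fin 3, ∑ l : Fin 3, Rhat q (i, j) (k, l) • (ξ k * x l)
  rel_ΛΛi : Λ * Λi = 1
  rel_ΛiΛ : Λi * Λ = 1
  rel_xΛ : ∀ i : Fin 3, x i * Λ = (q : ℂ) • (Λ * x i)
  rel_ξΛ : ∀ i : Fin 3, ξ i * Λ = (q : ℂ) • (Λ * ξ i)
  rel_ux : u * x 1 = 1
  rel_xu : x 1 * u = 1
  rel_ρρi : ρ * ρi = 1
  rel_ρiρ : ρi * ρ = 1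
  rel_ρx : ∀ i : Fin 3, ρ * x i = x i * ρ
  rel_ρξ : ∀ i : Fin 3, ρ * ξ i = (q : ℂ) • (ξ i * ρ)
  rel_ρsq : ρ * ρ = (Real.sqrt q : ℂ) • (x 2 * x 0) + x 1 * x 1 +
    ((Real.sqrt q : ℂ))⁻¹ • (x 0 * x 2)

/-- The frame matrix `M = ‖θ^a_i‖`:
`M¹₁ = u`, `M²₁ = q^{1/2}(q+1) ρ⁻¹ u x³`, `M²₂ = ρ⁻¹`,
`M³₁ = −q^{3/2}(q+1) ρ⁻² u (x³)²`, `M³₂ = −(q+1) ρ⁻² x³`, `M³₃ = ρ⁻² x²`,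
all other entries zero. -/
def Mmat {q : ℝ} {B : Type*} [Ring B] [Algebra ℂ B] (D : QSpace q B) (a i : Fin 3) : B :=
  match a.1, i.1 with
  | 0, 0 => D.u
  | 1, 0 => ((Real.sqrt q * (q + 1) : ℝ) : ℂ) • (D.ρi * D.u * D.x 2)
  | 1, 1 => D.ρi
  | 2, 0 => -(((Real.sqrt q * q * (q + 1) : ℝ)) : ℂ) • (D.ρi * D.ρi * D.u * (D.x 2 * D.x 2))
  | 2, 1 => -(((q + 1 : ℝ)) : ℂ) • (D.ρi * D.ρi * D.x 2)
  | 2, 2 => D.ρi * D.ρi * D.x 1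
  | _, _ => 0

/-- The frame one-forms `θ^a = Λ⁻¹ Σ_i M^a_i ξ^i`. -/
def theta {q : ℝ} {B : Type*} [Ring B] [Algebra ℂ B] (D : QSpace q B) (a : Fin 3) : B :=
  D.Λi * ∑ i : Fin 3, Mmat D a i * D.ξ i

section RTTAux

variable {q : ℝ} {B : Type*} [Ring B] [Algebra ℂ B]

omit [Algebra ℂ B] in
lemma mul_tail {a b c : B} (h : a * b = c) (t : B) : a * (b * t) = c * t := by
  rw [← mul_assoc, h]

lemma mul_tail_smul {a b c d : B} {σ : ℂ} (h : a * b = σ • (c * d)) (t : B) :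
    a * (b * t) = σ • (c * (d * t)) := by
  rw [← mul_assoc, h, smul_mul_assoc, mul_assoc]

variable (D : QSpace q B)

lemma rho_u : D.ρ * D.u = D.u * D.ρ := by
  have h : D.u * D.ρ = (D.u * (D.ρ * D.x 1)) * D.u := by
    rw [mul_assoc, mul_assoc, D.rel_xu, mul_one]
  rw [D.rel_ρx, ← mul_assoc, D.rel_ux, one_mul] at h
  exact h.symm

lemma u_rhoi : D.u * D.ρi = D.ρi * D.u := by
  have h : D.ρi * (D.ρ * (D.u * D.ρi)) = D.u * D.ρi := by
    rw [← mul_assoc, ← mul_assoc, D.rel_ρiρ, one_mul]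
  have h2 : D.ρ * (D.u * D.ρi) = D.u := by
    rw [← mul_assoc, rho_u, mul_assoc, D.rel_ρρi, mul_one]
  rw [h2] at h
  exact h.symm

lemma x_rhoi (i : Fin 3) : D.x i * D.ρi = D.ρi * D.x i := by
  have h : D.ρi * (D.ρ * (D.x i * D.ρi)) = D.x i * D.ρi := by
    rw [← mul_assoc, ← mul_assoc, D.rel_ρiρ, one_mul]
  have h2 : D.ρ * (D.x i * D.ρi) = D.x i := by
    rw [← mul_assoc, D.rel_ρx, mul_assoc, D.rel_ρρi, mul_one]
  rw [h2] at h
  exact h.symm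

lemma x2_u (hq : 0 < q) : D.x 2 * D.u = (q:ℂ) • (D.u * D.x 2) := by
  have h : D.u * (D.x 2 * D.x 1) * D.u = D.u * D.x 2 := by
    rw [mul_assoc, mul_assoc, D.rel_xu, mul_one]
  rw [D.rel_x32, mul_smul_comm, smul_mul_assoc, ← mul_assoc, D.rel_ux, one_mul] at h
  have hq0 : (q:ℂ) ≠ 0 := by exact_mod_cast hq.ne'
  calc D.x 2 * D.u = ((q:ℂ) * (q:ℂ)⁻¹) • (D.x 2 * D.u) := by
        rw [mul_inv_cancel₀ hq0, one_smul]
    _ = (q:ℂ) • (D.u * D.x 2) := by rw [mul_smul, ← h]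


end RTTAux

set_option maxHeartbeats 2000000 in
lemma dagger_00 {q : ℝ} {B : Type*} [Ring B] [Algebra ℂ B] (D : QSpace q B)
    (hq : 0 < q) (k l : Fin 3) :
    (∑ c : Fin 3, ∑ d : Fin 3, Rhat q ((0:Fin 3), (0:Fin 3)) (c, d) • (Mmat D d l * Mmat D c k)) =
    (∑ c : Fin 3, ∑ d : Fin 3, Rhat q (c, d) (k, l) • (Mmat D (0:Fin 3) d * Mmat D (0:Fin 3) c)) := by
  have hq0 : (q:ℂ) ≠ 0 := by exact_mod_cast hq.ne'
  have hs0 : ((Real.sqrt q : ℝ):ℂ) ≠ 0 := by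
    exact_mod_cast (Real.sqrt_pos.mpr hq).ne'
  have hs2 : ((q:ℝ):ℂ) = ((Real.sqrt q : ℝ):ℂ) * ((Real.sqrt q : ℝ):ℂ) := by
    rw [← Complex.ofReal_mul, Real.mul_self_sqrt hq.le]
  have t1 := mul_tail_smul (D.rel_x32)
  have t2 := mul_tail_smul (x2_u D hq)
  have t3 := mul_tail (D.rel_ux)
  have t4 := mul_tail (D.rel_xu)
  have t5 := mul_tail (u_rhoi D)
  have t6 := fun i => mul_tail (x_rhoi D i)
  fin_cases k <;> fin_cases l
  all_goals simp only [Fin.sum_univ_three]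
  all_goals simp only [Rhat, Rfrt, Mmat, Fin.val_zero, Fin.val_one, Fin.val_two]
  all_goals (try simp only [smul_mul_assoc, mul_smul_comm, smul_smul, mul_assoc, mul_one,
    one_mul, mul_zero, zero_mul, smul_zero, zero_smul, one_smul, add_zero, zero_add,
    D.rel_x32, x2_u D hq, D.rel_ux, D.rel_xu, u_rhoi D, x_rhoi D, t1, t2, t3, t4, t5, t6])
  all_goals match_scalars
  all_goals (try push_cast)
  all_goals (simp only [hs2, inv_pow]; field_simp)
  all_goals (first | ring1 | (ring_nf; simp only [inv_pow]; field_simp; ring1))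

set_option maxHeartbeats 2000000 in
lemma dagger_01 {q : ℝ} {B : Type*} [Ring B] [Algebra ℂ B] (D : QSpace q B)
    (hq : 0 < q) (k l : Fin 3) :
    (∑ c : Fin 3, ∑ d : Fin 3, Rhat q ((0:Fin 3), (1:Fin 3)) (c, d) • (Mmat D d l * Mmat D c k)) =
    (∑ c : Fin 3, ∑ d : Fin 3, Rhat q (c, d) (k, l) • (Mmat D (1:Fin 3) d * Mmat D (0:Fin 3) c)) := by
  have hq0 : (q:ℂ) ≠ 0 := by exact_mod_cast hq.ne'
  have hs0 : ((Real.sqrt q : ℝ):ℂ) ≠ 0 := by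
    exact_mod_cast (Real.sqrt_pos.mpr hq).ne'
  have hs2 : ((q:ℝ):ℂ) = ((Real.sqrt q : ℝ):ℂ) * ((Real.sqrt q : ℝ):ℂ) := by
    rw [← Complex.ofReal_mul, Real.mul_self_sqrt hq.le]
  have t1 := mul_tail_smul (D.rel_x32)
  have t2 := mul_tail_smul (x2_u D hq)
  have t3 := mul_tail (D.rel_ux)
  have t4 := mul_tail (D.rel_xu)
  have t5 := mul_tail (u_rhoi D)
  have t6 := fun i => mul_tail (x_rhoi D i)
  fin_cases k <;> fin_cases l
  all_goals simp only [Fin.sum_univ_three]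
  all_goals simp only [Rhat, Rfrt, Mmat, Fin.val_zero, Fin.val_one, Fin.val_two]
  all_goals (try simp only [smul_mul_assoc, mul_smul_comm, smul_smul, mul_assoc, mul_one,
    one_mul, mul_zero, zero_mul, smul_zero, zero_smul, one_smul, add_zero, zero_add,
    D.rel_x32, x2_u D hq, D.rel_ux, D.rel_xu, u_rhoi D, x_rhoi D, t1, t2, t3, t4, t5, t6])
  all_goals match_scalars
  all_goals (try push_cast)
  all_goals (simp only [hs2, inv_pow]; field_simp)
  all_goals (first | ring1 | (ring_nf; simp only [inv_pow]; field_simp; ring1))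

set_option maxHeartbeats 2000000 in
lemma dagger_02 {q : ℝ} {B : Type*} [Ring B] [Algebra ℂ B] (D : QSpace q B)
    (hq : 0 < q) (k l : Fin 3) :
    (∑ c : Fin 3, ∑ d : Fin 3, Rhat q ((0:Fin 3), (2:Fin 3)) (c, d) • (Mmat D d l * Mmat D c k)) =
    (∑ c : Fin 3, ∑ d : Fin 3, Rhat q (c, d) (k, l) • (Mmat D (2:Fin 3) d * Mmat D (0:Fin 3) c)) := by
  have hq0 : (q:ℂ) ≠ 0 := by exact_mod_cast hq.ne'
  have hs0 : ((Real.sqrt q : ℝ):ℂ) ≠ 0 := by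
    exact_mod_cast (Real.sqrt_pos.mpr hq).ne'
  have hs2 : ((q:ℝ):ℂ) = ((Real.sqrt q : ℝ):ℂ) * ((Real.sqrt q : ℝ):ℂ) := by
    rw [← Complex.ofReal_mul, Real.mul_self_sqrt hq.le]
  have t1 := mul_tail_smul (D.rel_x32)
  have t2 := mul_tail_smul (x2_u D hq)
  have t3 := mul_tail (D.rel_ux)
  have t4 := mul_tail (D.rel_xu)
  have t5 := mul_tail (u_rhoi D)
  have t6 := fun i => mul_tail (x_rhoi D i)
  fin_cases k <;> fin_cases l
  all_goals simp only [Fin.sum_univ_three]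
  all_goals simp only [Rhat, Rfrt, Mmat, Fin.val_zero, Fin.val_one, Fin.val_two]
  all_goals (try simp only [smul_mul_assoc, mul_smul_comm, smul_smul, mul_assoc, mul_one,
    one_mul, mul_zero, zero_mul, smul_zero, zero_smul, one_smul, add_zero, zero_add,
    D.rel_x32, x2_u D hq, D.rel_ux, D.rel_xu, u_rhoi D, x_rhoi D, t1, t2, t3, t4, t5, t6])
  all_goals match_scalars
  all_goals (try push_cast)
  all_goals (simp only [hs2, inv_pow]; field_simp)
  all_goals (first | ring1 | (ring_nf; simp only [inv_pow]; field_simp; ring1))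

set_option maxHeartbeats 2000000 in
lemma dagger_10 {q : ℝ} {B : Type*} [Ring B] [Algebra ℂ B] (D : QSpace q B)
    (hq : 0 < q) (k l : Fin 3) :
    (∑ c : Fin 3, ∑ d : Fin 3, Rhat q ((1:Fin 3), (0:Fin 3)) (c, d) • (Mmat D d l * Mmat D c k)) =
    (∑ c : Fin 3, ∑ d : Fin 3, Rhat q (c, d) (k, l) • (Mmat D (0:Fin 3) d * Mmat D (1:Fin 3) c)) := by
  have hq0 : (q:ℂ) ≠ 0 := by exact_mod_cast hq.ne'
  have hs0 : ((Real.sqrt q : ℝ):ℂ) ≠ 0 := by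
    exact_mod_cast (Real.sqrt_pos.mpr hq).ne'
  have hs2 : ((q:ℝ):ℂ) = ((Real.sqrt q : ℝ):ℂ) * ((Real.sqrt q : ℝ):ℂ) := by
    rw [← Complex.ofReal_mul, Real.mul_self_sqrt hq.le]
  have t1 := mul_tail_smul (D.rel_x32)
  have t2 := mul_tail_smul (x2_u D hq)
  have t3 := mul_tail (D.rel_ux)
  have t4 := mul_tail (D.rel_xu)
  have t5 := mul_tail (u_rhoi D)
  have t6 := fun i => mul_tail (x_rhoi D i)
  fin_cases k <;> fin_cases l
  all_goals simp only [Fin.sum_univ_three]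
  all_goals simp only [Rhat, Rfrt, Mmat, Fin.val_zero, Fin.val_one, Fin.val_two]
  all_goals (try simp only [smul_mul_assoc, mul_smul_comm, smul_smul, mul_assoc, mul_one,
    one_mul, mul_zero, zero_mul, smul_zero, zero_smul, one_smul, add_zero, zero_add,
    D.rel_x32, x2_u D hq, D.rel_ux, D.rel_xu, u_rhoi D, x_rhoi D, t1, t2, t3, t4, t5, t6])
  all_goals match_scalars
  all_goals (try push_cast)
  all_goals (simp only [hs2, inv_pow]; field_simp)
  all_goals (first | ring1 | (ring_nf; simp only [inv_pow]; field_simp; ring1))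

set_option maxHeartbeats 2000000 in
lemma dagger_11 {q : ℝ} {B : Type*} [Ring B] [Algebra ℂ B] (D : QSpace q B)
    (hq : 0 < q) (k l : Fin 3) :
    (∑ c : Fin 3, ∑ d : Fin 3, Rhat q ((1:Fin 3), (1:Fin 3)) (c, d) • (Mmat D d l * Mmat D c k)) =
    (∑ c : Fin 3, ∑ d : Fin 3, Rhat q (c, d) (k, l) • (Mmat D (1:Fin 3) d * Mmat D (1:Fin 3) c)) := by
  have hq0 : (q:ℂ) ≠ 0 := by exact_mod_cast hq.ne'
  have hs0 : ((Real.sqrt q : ℝ):ℂ) ≠ 0 := by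
    exact_mod_cast (Real.sqrt_pos.mpr hq).ne'
  have hs2 : ((q:ℝ):ℂ) = ((Real.sqrt q : ℝ):ℂ) * ((Real.sqrt q : ℝ):ℂ) := by
    rw [← Complex.ofReal_mul, Real.mul_self_sqrt hq.le]
  have t1 := mul_tail_smul (D.rel_x32)
  have t2 := mul_tail_smul (x2_u D hq)
  have t3 := mul_tail (D.rel_ux)
  have t4 := mul_tail (D.rel_xu)
  have t5 := mul_tail (u_rhoi D)
  have t6 := fun i => mul_tail (x_rhoi D i)
  fin_cases k <;> fin_cases l
  all_goals simp only [Fin.sum_univ_three]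
  all_goals simp only [Rhat, Rfrt, Mmat, Fin.val_zero, Fin.val_one, Fin.val_two]
  all_goals (try simp only [smul_mul_assoc, mul_smul_comm, smul_smul, mul_assoc, mul_one,
    one_mul, mul_zero, zero_mul, smul_zero, zero_smul, one_smul, add_zero, zero_add,
    D.rel_x32, x2_u D hq, D.rel_ux, D.rel_xu, u_rhoi D, x_rhoi D, t1, t2, t3, t4, t5, t6])
  all_goals match_scalars
  all_goals (try push_cast)
  all_goals (simp only [hs2, inv_pow]; field_simp)
  all_goals (first | ring1 | (ring_nf; simp only [inv_pow]; field_simp; ring1))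

set_option maxHeartbeats 2000000 in
lemma dagger_12 {q : ℝ} {B : Type*} [Ring B] [Algebra ℂ B] (D : QSpace q B)
    (hq : 0 < q) (k l : Fin 3) :
    (∑ c : Fin 3, ∑ d : Fin 3, Rhat q ((1:Fin 3), (2:Fin 3)) (c, d) • (Mmat D d l * Mmat D c k)) =
    (∑ c : Fin 3, ∑ d : Fin 3, Rhat q (c, d) (k, l) • (Mmat D (2:Fin 3) d * Mmat D (1:Fin 3) c)) := by
  have hq0 : (q:ℂ) ≠ 0 := by exact_mod_cast hq.ne'
  have hs0 : ((Real.sqrt q : ℝ):ℂ) ≠ 0 := by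
    exact_mod_cast (Real.sqrt_pos.mpr hq).ne'
  have hs2 : ((q:ℝ):ℂ) = ((Real.sqrt q : ℝ):ℂ) * ((Real.sqrt q : ℝ):ℂ) := by
    rw [← Complex.ofReal_mul, Real.mul_self_sqrt hq.le]
  have t1 := mul_tail_smul (D.rel_x32)
  have t2 := mul_tail_smul (x2_u D hq)
  have t3 := mul_tail (D.rel_ux)
  have t4 := mul_tail (D.rel_xu)
  have t5 := mul_tail (u_rhoi D)
  have t6 := fun i => mul_tail (x_rhoi D i)
  fin_cases k <;> fin_cases l
  all_goals simp only [Fin.sum_univ_three]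
  all_goals simp only [Rhat, Rfrt, Mmat, Fin.val_zero, Fin.val_one, Fin.val_two]
  all_goals (try simp only [smul_mul_assoc, mul_smul_comm, smul_smul, mul_assoc, mul_one,
    one_mul, mul_zero, zero_mul, smul_zero, zero_smul, one_smul, add_zero, zero_add,
    D.rel_x32, x2_u D hq, D.rel_ux, D.rel_xu, u_rhoi D, x_rhoi D, t1, t2, t3, t4, t5, t6])
  all_goals match_scalars
  all_goals (try push_cast)
  all_goals (simp only [hs2, inv_pow]; field_simp)
  all_goals (first | ring1 | (ring_nf; simp only [inv_pow]; field_simp; ring1))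

set_option maxHeartbeats 2000000 in
lemma dagger_20 {q : ℝ} {B : Type*} [Ring B] [Algebra ℂ B] (D : QSpace q B)
    (hq : 0 < q) (k l : Fin 3) :
    (∑ c : Fin 3, ∑ d : Fin 3, Rhat q ((2:Fin 3), (0:Fin 3)) (c, d) • (Mmat D d l * Mmat D c k)) =
    (∑ c : Fin 3, ∑ d : Fin 3, Rhat q (c, d) (k, l) • (Mmat D (0:Fin 3) d * Mmat D (2:Fin 3) c)) := by
  have hq0 : (q:ℂ) ≠ 0 := by exact_mod_cast hq.ne'
  have hs0 : ((Real.sqrt q : ℝ):ℂ) ≠ 0 := by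
    exact_mod_cast (Real.sqrt_pos.mpr hq).ne'
  have hs2 : ((q:ℝ):ℂ) = ((Real.sqrt q : ℝ):ℂ) * ((Real.sqrt q : ℝ):ℂ) := by
    rw [← Complex.ofReal_mul, Real.mul_self_sqrt hq.le]
  have t1 := mul_tail_smul (D.rel_x32)
  have t2 := mul_tail_smul (x2_u D hq)
  have t3 := mul_tail (D.rel_ux)
  have t4 := mul_tail (D.rel_xu)
  have t5 := mul_tail (u_rhoi D)
  have t6 := fun i => mul_tail (x_rhoi D i)
  fin_cases k <;> fin_cases l
  all_goals simp only [Fin.sum_univ_three]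
  all_goals simp only [Rhat, Rfrt, Mmat, Fin.val_zero, Fin.val_one, Fin.val_two]
  all_goals (try simp only [smul_mul_assoc, mul_smul_comm, smul_smul, mul_assoc, mul_one,
    one_mul, mul_zero, zero_mul, smul_zero, zero_smul, one_smul, add_zero, zero_add,
    D.rel_x32, x2_u D hq, D.rel_ux, D.rel_xu, u_rhoi D, x_rhoi D, t1, t2, t3, t4, t5, t6])
  all_goals match_scalars
  all_goals (try push_cast)
  all_goals (simp only [hs2, inv_pow]; field_simp)
  all_goals (first | ring1 | (ring_nf; simp only [inv_pow]; field_simp; ring1))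

set_option maxHeartbeats 2000000 in
lemma dagger_21 {q : ℝ} {B : Type*} [Ring B] [Algebra ℂ B] (D : QSpace q B)
    (hq : 0 < q) (k l : Fin 3) :
    (∑ c : Fin 3, ∑ d : Fin 3, Rhat q ((2:Fin 3), (1:Fin 3)) (c, d) • (Mmat D d l * Mmat D c k)) =
    (∑ c : Fin 3, ∑ d : Fin 3, Rhat q (c, d) (k, l) • (Mmat D (1:Fin 3) d * Mmat D (2:Fin 3) c)) := by
  have hq0 : (q:ℂ) ≠ 0 := by exact_mod_cast hq.ne'
  have hs0 : ((Real.sqrt q : ℝ):ℂ) ≠ 0 := by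
    exact_mod_cast (Real.sqrt_pos.mpr hq).ne'
  have hs2 : ((q:ℝ):ℂ) = ((Real.sqrt q : ℝ):ℂ) * ((Real.sqrt q : ℝ):ℂ) := by
    rw [← Complex.ofReal_mul, Real.mul_self_sqrt hq.le]
  have t1 := mul_tail_smul (D.rel_x32)
  have t2 := mul_tail_smul (x2_u D hq)
  have t3 := mul_tail (D.rel_ux)
  have t4 := mul_tail (D.rel_xu)
  have t5 := mul_tail (u_rhoi D)
  have t6 := fun i => mul_tail (x_rhoi D i)
  fin_cases k <;> fin_cases l
  all_goals simp only [Fin.sum_univ_three]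
  all_goals simp only [Rhat, Rfrt, Mmat, Fin.val_zero, Fin.val_one, Fin.val_two]
  all_goals (try simp only [smul_mul_assoc, mul_smul_comm, smul_smul, mul_assoc, mul_one,
    one_mul, mul_zero, zero_mul, smul_zero, zero_smul, one_smul, add_zero, zero_add,
    D.rel_x32, x2_u D hq, D.rel_ux, D.rel_xu, u_rhoi D, x_rhoi D, t1, t2, t3, t4, t5, t6])
  all_goals match_scalars
  all_goals (try push_cast)
  all_goals (simp only [hs2, inv_pow]; field_simp)
  all_goals (first | ring1 | (ring_nf; simp only [inv_pow]; field_simp; ring1))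

set_option maxHeartbeats 2000000 in
lemma dagger_22 {q : ℝ} {B : Type*} [Ring B] [Algebra ℂ B] (D : QSpace q B)
    (hq : 0 < q) (k l : Fin 3) :
    (∑ c : Fin 3, ∑ d : Fin 3, Rhat q ((2:Fin 3), (2:Fin 3)) (c, d) • (Mmat D d l * Mmat D c k)) =
    (∑ c : Fin 3, ∑ d : Fin 3, Rhat q (c, d) (k, l) • (Mmat D (2:Fin 3) d * Mmat D (2:Fin 3) c)) := by
  have hq0 : (q:ℂ) ≠ 0 := by exact_mod_cast hq.ne'
  have hs0 : ((Real.sqrt q : ℝ):ℂ) ≠ 0 := by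
    exact_mod_cast (Real.sqrt_pos.mpr hq).ne'
  have hs2 : ((q:ℝ):ℂ) = ((Real.sqrt q : ℝ):ℂ) * ((Real.sqrt q : ℝ):ℂ) := by
    rw [← Complex.ofReal_mul, Real.mul_self_sqrt hq.le]
  have t1 := mul_tail_smul (D.rel_x32)
  have t2 := mul_tail_smul (x2_u D hq)
  have t3 := mul_tail (D.rel_ux)
  have t4 := mul_tail (D.rel_xu)
  have t5 := mul_tail (u_rhoi D)
  have t6 := fun i => mul_tail (x_rhoi D i)
  fin_cases k <;> fin_cases l
  all_goals simp only [Fin.sum_univ_three]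
  all_goals simp only [Rhat, Rfrt, Mmat, Fin.val_zero, Fin.val_one, Fin.val_two]
  all_goals (try simp only [smul_mul_assoc, mul_smul_comm, smul_smul, mul_assoc, mul_one,
    one_mul, mul_zero, zero_mul, smul_zero, zero_smul, one_smul, add_zero, zero_add,
    D.rel_x32, x2_u D hq, D.rel_ux, D.rel_xu, u_rhoi D, x_rhoi D, t1, t2, t3, t4, t5, t6])
  all_goals match_scalars
  all_goals (try push_cast)
  all_goals (simp only [hs2, inv_pow]; field_simp)
  all_goals (first | ring1 | (ring_nf; simp only [inv_pow]; field_simp; ring1))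

lemma dagger {q : ℝ} {B : Type*} [Ring B] [Algebra ℂ B] (D : QSpace q B)
    (hq : 0 < q) (a b k l : Fin 3) :
    (∑ c : Fin 3, ∑ d : Fin 3, Rhat q (a, b) (c, d) • (Mmat D d l * Mmat D c k)) =
    (∑ c : Fin 3, ∑ d : Fin 3, Rhat q (c, d) (k, l) • (Mmat D b d * Mmat D a c)) := by
  fin_cases a <;> fin_cases b
  exacts [dagger_00 D hq k l, dagger_01 D hq k l, dagger_02 D hq k l,
    dagger_10 D hq k l, dagger_11 D hq k l, dagger_12 D hq k l,
    dagger_20 D hq k l, dagger_21 D hq k l, dagger_22 D hq k l]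

/-- scalar `R̂` as a matrix over `B`. -/
def Rmat (q : ℝ) (B : Type*) [Ring B] [Algebra ℂ B] :
    Matrix (Fin 3 × Fin 3) (Fin 3 × Fin 3) B :=
  fun p r => algebraMap ℂ B (Rhat q p r)

def Gmat {q : ℝ} {B : Type*} [Ring B] [Algebra ℂ B] (D : QSpace q B) :
    Matrix (Fin 3 × Fin 3) (Fin 3 × Fin 3) B :=
  fun p r => Mmat D p.2 r.2 * Mmat D p.1 r.1

def Hmat {B : Type*} [Ring B] (E : Fin 3 → Fin 3 → B) :
    Matrix (Fin 3 × Fin 3) (Fin 3 × Fin 3) B :=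
  fun p r => E p.1 r.1 * E p.2 r.2

/-- The entries of the inverse frame matrix satisfy the RTT-relations of
`SO_q(3)`: if `E` is the two-sided inverse of `M`, then
`Σ_{k,l} R̂^{ij}_{kl} E^k_a E^l_b = Σ_{c,d} E^i_c E^j_d R̂^{cd}_{ab}` for all `i, j, a, b`. -/
theorem RTT_relations (q : ℝ) (hq : 0 < q) (hq1 : q ≠ 1)
    {B : Type*} [Ring B] [Algebra ℂ B] (D : QSpace q B) (E : Fin 3 → Fin 3 → B)
    (hE1 : ∀ i j : Fin 3, (∑ a : Fin 3, E i a * Mmat D a j) = if i = j then 1 else 0)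
    (hE2 : ∀ a b : Fin 3, (∑ i : Fin 3, Mmat D a i * E i b) = if a = b then 1 else 0) :
    ∀ i j a b : Fin 3,
      (∑ k : Fin 3, ∑ l : Fin 3, Rhat q (i, j) (k, l) • (E k a * E l b)) =
      (∑ c : Fin 3, ∑ d : Fin 3, Rhat q (c, d) (a, b) • (E i c * E j d)) := by
  classical
  have hHG : Hmat E * Gmat D = 1 := by
    ext ⟨k, l⟩ ⟨k', l'⟩
    rw [Matrix.mul_apply, Fintype.sum_prod_type]
    have step : ∀ a : Fin 3,
        (∑ b : Fin 3, Hmat E (k, l) (a, b) * Gmat D (a, b) (k', l'))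
          = E k a * ((if l = l' then (1:B) else 0) * Mmat D a k') := by
      intro a
      rw [← hE1 l l', Finset.sum_mul, Finset.mul_sum]
      apply Finset.sum_congr rfl
      intro b _
      simp only [Hmat, Gmat, mul_assoc]
    simp only [step]
    by_cases h : l = l'
    · subst h
      simpa [Matrix.one_apply, Prod.ext_iff] using hE1 k k'
    · simp [h, Matrix.one_apply, Prod.ext_iff]
  have hGH : Gmat D * Hmat E = 1 := by
    ext ⟨a, b⟩ ⟨a', b'⟩
    rw [Matrix.mul_apply, Fintype.sum_prod_type, Finset.sum_comm]
    have step : ∀ l : Fin 3,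
        (∑ k : Fin 3, Gmat D (a, b) (k, l) * Hmat E (k, l) (a', b'))
          = Mmat D b l * ((if a = a' then (1:B) else 0) * E l b') := by
      intro l
      rw [← hE2 a a', Finset.sum_mul, Finset.mul_sum]
      apply Finset.sum_congr rfl
      intro k _
      simp only [Hmat, Gmat, mul_assoc]
    simp only [step]
    by_cases h : a = a'
    · subst h
      simpa [Matrix.one_apply, Prod.ext_iff] using hE2 b b'
    · simp [h, Matrix.one_apply, Prod.ext_iff]
  have hRG : Rmat q B * Gmat D = Gmat D * Rmat q B := by
    ext ⟨a, b⟩ ⟨k, l⟩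
    rw [Matrix.mul_apply, Matrix.mul_apply, Fintype.sum_prod_type, Fintype.sum_prod_type]
    simp only [Rmat, Gmat, Hmat, ← Algebra.commutes, ← Algebra.smul_def]
    exact dagger D hq a b k l
  have hRH : Rmat q B * Hmat E = Hmat E * Rmat q B := by
    calc Rmat q B * Hmat E = (Hmat E * Gmat D) * (Rmat q B * Hmat E) := by
          rw [hHG, one_mul]
      _ = Hmat E * (Gmat D * Rmat q B) * Hmat E := by simp only [mul_assoc]
      _ = Hmat E * (Rmat q B * Gmat D) * Hmat E := by rw [hRG]
      _ = (Hmat E * Rmat q B) * (Gmat D * Hmat E) := by simp only [mul_assoc]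
      _ = Hmat E * Rmat q B := by rw [hGH, mul_one]
  intro i j a b
  have h : (Rmat q B * Hmat E) (i, j) (a, b) = (Hmat E * Rmat q B) (i, j) (a, b) := by
    rw [hRH]
  rw [Matrix.mul_apply, Matrix.mul_apply, Fintype.sum_prod_type, Fintype.sum_prod_type] at h
  simp only [Rmat, Hmat, ← Algebra.commutes, ← Algebra.smul_def] at h
  exact h
end
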